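/- arXiv:1408.1301 — 8 statements merged into one kernel-verified Lean document; each statement's English description precedes it below -/
import Mathlib

section
/- If for every λ > 1 the logarithmic moving average converges, i.e. (U(n) - U(n^{1/λ}))/log n → (1 - 1/λ)·s as n → ∞ (through real x), then this convergence is uniform in λ on compact subsets of (1, ∞). -/
/-
Write `g x = U x / log x - c`. Since `log (x ^ (1 / 2)) = log x / 2`, the hypothesis for `λ = 2`
says `g x - g (√x) / 2 → 0`. In the variable `t = log₂ (log x)` the map `x ↦ √x` becomes the shift
`t ↦ t - 1`, so `|g|` is at most `2⁻ⁿ M + 2ε` on the `n`-th unit interval beyond a threshold,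
where `M` bounds `|g|` on the first one; hence `U x / log x → c`. Once this limit is known,
`(U x - U (x ^ (1 / λ))) / log x - (1 - 1 / λ) c = g x - g (x ^ (1 / λ)) / λ`, and
`x ^ (1 / λ) ≥ x ^ (1 / b)` for `λ ≤ b` makes both terms small uniformly in `λ`.
-/

open Filter Set Real Topology

lemma bddAbove_abs_comp_floor_image_Iic (F : ℕ → ℝ) (b : ℝ) :
    BddAbove ((fun x : ℝ => |F ⌊x⌋₊|) '' Iic b) := by
  refine ((finite_Iic ⌊b⌋₊).image fun n => |F n|).bddAbove.mono ?_
  rintro _ ⟨x, hx, rfl⟩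
  exact ⟨⌊x⌋₊, Nat.floor_mono hx, rfl⟩

lemma abs_le_pow_mul_add_of_abs_add_one_sub_mul_le {G : ℝ → ℝ} {r T M e : ℝ} (hr : |r| < 1)
    (he : 0 ≤ e) (hstep : ∀ t ≥ T, |G (t + 1) - r * G t| ≤ e)
    (hM : ∀ t ∈ Icc T (T + 1), |G t| ≤ M) (n : ℕ) :
    ∀ t ∈ Icc (T + n) (T + n + 1), |G t| ≤ |r| ^ n * M + e / (1 - |r|) := by
  have hr' : 0 < 1 - |r| := by linarith
  induction n with
  | zero =>
    intro t ht
    simp only [Nat.cast_zero, add_zero] at ht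
    simp only [pow_zero, one_mul]
    linarith [hM t ht, div_nonneg he hr'.le]
  | succ n ih =>
    intro t ht
    have hprev : t - 1 ∈ Icc (T + n) (T + n + 1) := by
      push_cast at ht; constructor <;> linarith [ht.1, ht.2]
    have hT : T ≤ t - 1 := by linarith [hprev.1, (Nat.cast_nonneg n : (0 : ℝ) ≤ n)]
    have hs := hstep (t - 1) hT
    rw [sub_add_cancel] at hs
    calc |G t| ≤ |r| * |G (t - 1)| + e := by
          have htri := abs_sub_abs_le_abs_sub (G t) (r * G (t - 1))
          rw [abs_mul] at htri
          linarith
      _ ≤ |r| * (|r| ^ n * M + e / (1 - |r|)) + e := by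
          gcongr; exact ih _ hprev
      _ = |r| ^ (n + 1) * M + e / (1 - |r|) := by field_simp; ring

lemma tendsto_zero_of_tendsto_add_one_sub_mul {G : ℝ → ℝ} {r : ℝ} (hr : |r| < 1)
    (hbdd : ∀ᶠ a in atTop, BddAbove ((fun t => |G t|) '' Icc a (a + 1)))
    (h : Tendsto (fun t => G (t + 1) - r * G t) atTop (𝓝 0)) :
    Tendsto G atTop (𝓝 0) := by
  rw [Metric.tendsto_atTop]
  intro ε hε
  have hr' : 0 < 1 - |r| := by linarith
  set e := ε / 2 * (1 - |r|)
  have hepos : 0 < e := by positivity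
  obtain ⟨T₁, hT₁⟩ := Metric.tendsto_atTop.1 h e hepos
  obtain ⟨T₂, hT₂⟩ := eventually_atTop.1 hbdd
  set T := max T₁ T₂
  obtain ⟨M, hM⟩ := hT₂ T (le_max_right _ _)
  have hbound := abs_le_pow_mul_add_of_abs_add_one_sub_mul_le hr hepos.le
    (fun t ht => by simpa using (hT₁ t ((le_max_left _ _).trans ht)).le)
    (fun t ht => hM (mem_image_of_mem _ ht))
  have hdecay : Tendsto (fun n : ℕ => |r| ^ n * M) atTop (𝓝 0) := by
    simpa using (tendsto_pow_atTop_nhds_zero_of_lt_one (abs_nonneg r) hr).mul_const M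
  obtain ⟨N, hN⟩ := eventually_atTop.1 (hdecay.eventually (gt_mem_nhds (half_pos hε)))
  refine ⟨T + N, fun t ht => ?_⟩
  have htT : 0 ≤ t - T := by linarith [(Nat.cast_nonneg N : (0 : ℝ) ≤ N)]
  have hn : N ≤ ⌊t - T⌋₊ := Nat.le_floor (by linarith)
  have ht := hbound ⌊t - T⌋₊ t
    ⟨by linarith [Nat.floor_le htT], by linarith [Nat.lt_floor_add_one (t - T)]⟩
  have hhalf : e / (1 - |r|) = ε / 2 := mul_div_cancel_right₀ _ hr'.ne'
  rw [Real.dist_0_eq_abs]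
  linarith [hN _ hn]

lemma tendsto_zero_of_tendsto_sub_mul_comp_rpow {g : ℝ → ℝ} {l r : ℝ} (hl : 1 < l)
    (hr : |r| < 1) (hbdd : ∀ᶠ a in atTop, ∀ b, BddAbove ((fun x => |g x|) '' Icc a b))
    (h : Tendsto (fun x => g x - r * g (x ^ (1 / l))) atTop (𝓝 0)) :
    Tendsto g atTop (𝓝 0) := by
  have hl0 : 0 < l := zero_lt_one.trans hl
  have hexp : Tendsto (fun t : ℝ => exp (l ^ t)) atTop atTop :=
    tendsto_exp_atTop.comp (tendsto_rpow_atTop_of_base_gt_one l hl)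
  have hshift :
      Tendsto (fun t : ℝ => g (exp (l ^ (t + 1))) - r * g (exp (l ^ t))) atTop (𝓝 0) := by
    refine (h.comp (hexp.comp (tendsto_atTop_add_const_right _ 1 tendsto_id))).congr fun t => ?_
    simp only [Function.comp_apply, id, ← exp_mul, rpow_add_one hl0.ne']
    field_simp
  have hbdd' :
      ∀ᶠ a : ℝ in atTop, BddAbove ((fun t : ℝ => |g (exp (l ^ t))|) '' Icc a (a + 1)) := by
    refine (hexp.eventually hbdd).mono fun a ha => (ha (exp (l ^ (a + 1)))).mono ?_
    rintro _ ⟨t, ht, rfl⟩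
    exact ⟨exp (l ^ t), ⟨exp_le_exp.2 (rpow_le_rpow_of_exponent_le hl.le ht.1),
      exp_le_exp.2 (rpow_le_rpow_of_exponent_le hl.le ht.2)⟩, rfl⟩
  refine ((tendsto_zero_of_tendsto_add_one_sub_mul hr hbdd' hshift).comp
    ((tendsto_logb_atTop hl).comp tendsto_log_atTop)).congr' ?_
  filter_upwards [eventually_gt_atTop 1] with x hx
  simp [rpow_logb hl0 hl.ne' (log_pos hx), exp_log (zero_lt_one.trans hx)]

lemma tendsto_div_log_of_tendsto_log_moving_average {U : ℝ → ℝ} {c l : ℝ} (hl : 1 < l)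
    (hbdd : ∀ a b, BddAbove ((fun x => |U x|) '' Icc a b))
    (h : Tendsto (fun x => (U x - U (x ^ (1 / l))) / log x) atTop (𝓝 ((1 - 1 / l) * c))) :
    Tendsto (fun x => U x / log x) atTop (𝓝 c) := by
  have hl0 : 0 < l := zero_lt_one.trans hl
  set g := fun x => U x / log x - c
  have hg : Tendsto (fun x => g x - 1 / l * g (x ^ (1 / l))) atTop (𝓝 0) := by
    rw [← tendsto_sub_const_iff ((1 - 1 / l) * c), sub_self] at h
    refine h.congr' ?_
    filter_upwards [eventually_gt_atTop 1] with x hx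
    have hlog : log x ≠ 0 := (log_pos hx).ne'
    simp only [g, log_rpow (zero_lt_one.trans hx)]
    field_simp
    ring
  have hgbdd : ∀ᶠ a in atTop, ∀ b, BddAbove ((fun x => |g x|) '' Icc a b) := by
    filter_upwards [eventually_gt_atTop 1] with a ha b
    obtain ⟨M, hM⟩ := hbdd a b
    refine ⟨M / log a + |c|, ?_⟩
    rintro _ ⟨x, hx, rfl⟩
    have hUx : |U x| ≤ M := hM (mem_image_of_mem _ hx)
    have hloga : 0 < log a := log_pos ha
    have hlogx : log a ≤ log x := log_le_log (zero_lt_one.trans ha) hx.1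
    calc |U x / log x - c| ≤ |U x / log x| + |c| := abs_sub _ _
      _ = |U x| / log x + |c| := by rw [abs_div, abs_of_pos (hloga.trans_le hlogx)]
      _ ≤ M / log a + |c| := by
          gcongr
          exact (abs_nonneg _).trans hUx
  have hr : |1 / l| < 1 := by
    rw [abs_of_pos (one_div_pos.2 hl0)]
    exact (div_lt_one hl0).2 hl
  simpa [g] using (tendsto_zero_of_tendsto_sub_mul_comp_rpow hl hr hgbdd hg).add_const c

lemma tendstoUniformlyOn_log_moving_average {U : ℝ → ℝ} {c a b : ℝ}
    (hU : Tendsto (fun x => U x / log x) atTop (𝓝 c)) (ha : 0 < a) :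
    TendstoUniformlyOn (fun x l => (U x - U (x ^ (1 / l))) / log x) (fun l => (1 - 1 / l) * c)
      atTop (Icc a b) := by
  rw [Metric.tendstoUniformlyOn_iff]
  intro ε hε
  set δ := ε / (1 + 1 / a)
  have hδ : 0 < δ := by positivity
  obtain ⟨Y, hY⟩ := Metric.tendsto_atTop.1 hU δ hδ
  rcases (Icc a b).eq_empty_or_nonempty with hK | ⟨l₀, hl₀⟩
  · simp [hK]
  have hb : 0 < b := ha.trans_le (hl₀.1.trans hl₀.2)
  filter_upwards [eventually_gt_atTop (max Y 1),
    (tendsto_rpow_atTop (one_div_pos.2 hb)).eventually_ge_atTop Y] with x hx hxb l hl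
  have hx1 : 1 < x := (le_max_right _ _).trans_lt hx
  have hl0 : 0 < l := ha.trans_le hl.1
  have hxl : Y ≤ x ^ (1 / l) :=
    hxb.trans (rpow_le_rpow_of_exponent_le hx1.le (one_div_le_one_div_of_le hl0 hl.2))
  have key : (1 - 1 / l) * c - (U x - U (x ^ (1 / l))) / log x
      = 1 / l * (U (x ^ (1 / l)) / log (x ^ (1 / l)) - c) - (U x / log x - c) := by
    rw [log_rpow (zero_lt_one.trans hx1)]
    field_simp [(log_pos hx1).ne']
    ring
  have h1 : |U x / log x - c| < δ := hY x ((le_max_left _ _).trans hx.le)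
  have h2 : |U (x ^ (1 / l)) / log (x ^ (1 / l)) - c| < δ := hY _ hxl
  have hinv : 1 / l ≤ 1 / a := one_div_le_one_div_of_le ha hl.1
  rw [dist_eq, key]
  calc _ ≤ 1 / l * |U (x ^ (1 / l)) / log (x ^ (1 / l)) - c| + |U x / log x - c| := by
        refine (abs_sub _ _).trans_eq ?_
        rw [abs_mul, abs_of_pos (one_div_pos.2 hl0)]
    _ < 1 / a * δ + δ := add_lt_add_of_le_of_lt (by gcongr) h1
    _ = ε := by simp only [δ]; field_simp; ring

/-- If for every `λ > 1` we have `(U(x) - U(x^(1/λ)))/log x → (1 - 1/λ)·s` as `x → ∞`,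
where `U(x) = ∑_{0 ≤ i ≤ x} sᵢ/(i+1)`, then the convergence is uniform in `λ` on
compact subsets of `(1, ∞)`. -/
theorem log_moving_average_uniform_on_compacts (s : ℕ → ℝ) (c : ℝ)
    (U : ℝ → ℝ) (hU : ∀ x : ℝ, U x = ∑ i ∈ Finset.range (⌊x⌋₊ + 1), s i / (i + 1))
    (h : ∀ l : ℝ, 1 < l →
      Tendsto (fun x : ℝ => (U x - U (x ^ (1 / l))) / Real.log x) atTop
        (nhds ((1 - 1 / l) * c))) :
    ∀ K : Set ℝ, IsCompact K → K ⊆ Set.Ioi 1 →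
      TendstoUniformlyOn (fun (x : ℝ) (l : ℝ) => (U x - U (x ^ (1 / l))) / Real.log x)
        (fun l => (1 - 1 / l) * c) atTop K := by
  intro K hK hK1
  rcases K.eq_empty_or_nonempty with rfl | hne
  · exact tendstoUniformlyOn_empty
  obtain ⟨a, haK, ha⟩ := hK.exists_isLeast hne
  obtain ⟨b, -, hb⟩ := hK.exists_isGreatest hne
  have hbdd : ∀ a b, BddAbove ((fun x => |U x|) '' Icc a b) := fun a b => by
    simp_rw [hU]
    exact (bddAbove_abs_comp_floor_image_Iic
      (fun n => ∑ i ∈ Finset.range (n + 1), s i / (i + 1)) b).mono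
      (image_mono Icc_subset_Iic_self)
  have hlim := tendsto_div_log_of_tendsto_log_moving_average one_lt_two hbdd (h 2 one_lt_two)
  exact (tendstoUniformlyOn_log_moving_average hlim (zero_lt_one.trans (hK1 haK))).mono
    fun l hl => ⟨ha hl, hb hl⟩
end

section
/- Let V : (0,∞) → ℝ satisfy (V(λy) - V(y))/y → (λ - 1)·s as y → ∞ for every λ ≥ 1, where V is locally bounded. Then this convergence is locally uniform in λ on [1, ∞). -/
/-!
Since `V(2y)/(2y) - c = ((V y / y - c) + ((V(2y) - V y)/y - c))/2`, the error `V y / y - c` is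
halved at each doubling up to a term tending to zero; starting from a bounded block `[Y, 2Y]`,
local boundedness and iteration give `V y / y → c`. The identity
`(V(λy) - V y)/y - (λ - 1)c = λ (V(λy)/(λy) - c) - (V y / y - c)` then makes the convergence
uniform for `λ` in a bounded subset of `[1, ∞)`, because `λy ≥ y`.
-/

open Filter Topology

lemma abs_comp_two_pow_mul_le {g : ℝ → ℝ} {Y ε : ℝ} (hY : 0 ≤ Y)
    (h : ∀ w ≥ Y, |2 * g (2 * w) - g w| ≤ ε) (n : ℕ) {w : ℝ} (hw : Y ≤ w) :
    |g (2 ^ n * w)| ≤ |g w| / 2 ^ n + ε := by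
  induction n with
  | zero => simpa using (abs_nonneg _).trans (h w hw)
  | succ n ih =>
    set u := 2 ^ n * w
    have hu : Y ≤ u := hw.trans (le_mul_of_one_le_left (hY.trans hw) (one_le_pow₀ one_le_two))
    calc |g (2 ^ (n + 1) * w)| = |g (2 * u)| := by rw [pow_succ', mul_assoc]
      _ = |g u + (2 * g (2 * u) - g u)| / 2 := by
          rw [add_sub_cancel, abs_mul, abs_two, mul_div_cancel_left₀ _ two_ne_zero]
      _ ≤ (|g u| + |2 * g (2 * u) - g u|) / 2 := by gcongr; exact abs_add_le _ _
      _ ≤ (|g w| / 2 ^ n + ε + ε) / 2 := by gcongr; exact h u hu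
      _ = |g w| / 2 ^ (n + 1) + ε := by rw [pow_succ]; ring

lemma tendsto_zero_of_doubling_defect_tendsto_zero {g : ℝ → ℝ}
    (hbdd : ∀ᶠ Y in atTop, ∃ M, ∀ z ∈ Set.Icc Y (2 * Y), |g z| ≤ M)
    (h : Tendsto (fun w => 2 * g (2 * w) - g w) atTop (𝓝 0)) :
    Tendsto g atTop (𝓝 0) := by
  rw [Metric.tendsto_atTop]
  intro ε hε
  obtain ⟨Y₀, hY₀⟩ := eventually_atTop.1 ((Metric.tendsto_nhds.1 h) (ε / 2) (half_pos hε))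
  obtain ⟨Y, ⟨M, hM⟩, hYY₀, hY⟩ :=
    (hbdd.and ((eventually_ge_atTop Y₀).and (eventually_gt_atTop 0))).exists
  have hM0 : 0 ≤ M := (abs_nonneg _).trans (hM Y ⟨le_rfl, by linarith⟩)
  obtain ⟨N, hN⟩ : ∃ N : ℕ, M / 2 ^ N < ε / 2 :=
    ((tendsto_pow_atTop_atTop_of_one_lt one_lt_two).const_div_atTop M).eventually
      (gt_mem_nhds (half_pos hε)) |>.exists
  refine ⟨2 ^ N * Y, fun z hz => ?_⟩
  obtain ⟨n, hnz, hzn⟩ := exists_nat_pow_near (x := z / Y)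
    ((one_le_div hY).2 (hz.trans' (le_mul_of_one_le_left hY.le (one_le_pow₀ one_le_two))))
    one_lt_two
  rw [le_div_iff₀ hY] at hnz
  rw [div_lt_iff₀ hY] at hzn
  have hNn : N ≤ n := by
    have : (2 : ℝ) ^ N < 2 ^ (n + 1) := lt_of_mul_lt_mul_right (hz.trans_lt hzn) hY.le
    have := (pow_lt_pow_iff_right₀ one_lt_two).1 this
    omega
  set w := z / 2 ^ n
  have hw : w ∈ Set.Icc Y (2 * Y) := by
    constructor
    · rwa [le_div_iff₀ (by positivity), mul_comm]
    · rw [div_le_iff₀ (by positivity)]; rw [pow_succ] at hzn; linarith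
  have hzw : z = 2 ^ n * w := (mul_div_cancel₀ z (by positivity)).symm
  have hdefect : ∀ u ≥ Y, |2 * g (2 * u) - g u| ≤ ε / 2 := fun u hu => by
    simpa [Real.dist_eq] using (hY₀ u (hYY₀.trans hu)).le
  rw [Real.dist_eq, sub_zero, hzw]
  calc |g (2 ^ n * w)| ≤ |g w| / 2 ^ n + ε / 2 := abs_comp_two_pow_mul_le hY.le hdefect n hw.1
    _ ≤ M / 2 ^ N + ε / 2 := by
        gcongr
        · exact hM w hw
        · exact one_le_two
    _ < ε := by linarith

lemma tendsto_div_self_of_doubling {V : ℝ → ℝ} {c : ℝ}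
    (hbdd : ∀ K : Set ℝ, IsCompact K → K ⊆ Set.Ioi 0 → ∃ M, ∀ y ∈ K, |V y| ≤ M)
    (h2 : Tendsto (fun y => (V (2 * y) - V y) / y) atTop (𝓝 c)) :
    Tendsto (fun y => V y / y) atTop (𝓝 c) := by
  rw [← tendsto_sub_nhds_zero_iff]
  refine tendsto_zero_of_doubling_defect_tendsto_zero ?_ ?_
  · filter_upwards [eventually_gt_atTop 0] with Y hY
    obtain ⟨M, hM⟩ := hbdd (Set.Icc Y (2 * Y)) isCompact_Icc fun z hz => hY.trans_le hz.1
    refine ⟨M / Y + |c|, fun z hz => ?_⟩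
    have hz0 : 0 < z := hY.trans_le hz.1
    have hM0 : 0 ≤ M := (abs_nonneg _).trans (hM z hz)
    calc |V z / z - c| ≤ |V z| / z + |c| := by
          rw [← abs_of_pos hz0, ← abs_div, abs_of_pos hz0]; exact abs_sub _ _
      _ ≤ M / Y + |c| := by gcongr; exacts [hM z hz, hz.1]
  · rw [← sub_self c]
    refine (h2.sub_const c).congr' ?_
    filter_upwards [eventually_ne_atTop 0] with w hw
    field_simp
    ring

lemma tendstoUniformlyOn_mul_comp_mul {r : ℝ → ℝ} (hr : Tendsto r atTop (𝓝 0))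
    {K : Set ℝ} (hK : BddAbove K) (hK1 : K ⊆ Set.Ici 1) :
    TendstoUniformlyOn (fun y l => l * r (l * y)) 0 atTop K := by
  obtain ⟨Λ, hΛ⟩ := hK
  rw [Metric.tendstoUniformlyOn_iff]
  intro ε hε
  have hΛ0 : 0 < max Λ 1 := lt_max_of_lt_right one_pos
  obtain ⟨Z, hZ⟩ := eventually_atTop.1
    ((Metric.tendsto_nhds.1 hr) (ε / max Λ 1) (div_pos hε hΛ0))
  filter_upwards [eventually_ge_atTop (max Z 0)] with y hy l hl
  have hl1 : 1 ≤ l := hK1 hl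
  have hly : Z ≤ l * y :=
    (le_of_max_le_left hy).trans (le_mul_of_one_le_left (le_of_max_le_right hy) hl1)
  have hrly : |r (l * y)| < ε / max Λ 1 := by simpa [Real.dist_eq] using hZ _ hly
  rw [Pi.zero_apply, dist_zero_left, Real.norm_eq_abs, abs_mul, abs_of_pos (by linarith)]
  calc l * |r (l * y)| ≤ max Λ 1 * |r (l * y)| := by gcongr; exact le_max_of_le_left (hΛ hl)
    _ < max Λ 1 * (ε / max Λ 1) := by gcongr
    _ = ε := mul_div_cancel₀ ε hΛ0.ne'

/-- De Haan's uniform convergence theorem for the class Π with auxiliary function `y`: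
if `V` is locally bounded and `(V(λy) - V(y))/y → (λ - 1)·s` for every `λ ≥ 1`, then
the convergence is locally uniform in `λ` on `[1, ∞)`. -/
theorem deHaan_uniform_convergence (V : ℝ → ℝ) (c : ℝ)
    (hbdd : ∀ K : Set ℝ, IsCompact K → K ⊆ Set.Ioi 0 → ∃ M, ∀ y ∈ K, |V y| ≤ M)
    (h : ∀ l : ℝ, 1 ≤ l →
      Tendsto (fun y : ℝ => (V (l * y) - V y) / y) atTop (nhds ((l - 1) * c))) :
    ∀ K : Set ℝ, IsCompact K → K ⊆ Set.Ici 1 →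
      TendstoUniformlyOn (fun (y : ℝ) (l : ℝ) => (V (l * y) - V y) / y)
        (fun l => (l - 1) * c) atTop K := by
  intro K hK hK1
  have hr : Tendsto (fun y => V y / y - c) atTop (𝓝 0) := by
    rw [tendsto_sub_nhds_zero_iff]
    refine tendsto_div_self_of_doubling hbdd ?_
    simpa [show (2 : ℝ) - 1 = 1 by norm_num] using h 2 one_le_two
  have hG :=
    (tendstoUniformlyOn_mul_comp_mul hr hK.bddAbove hK1).sub (hr.tendstoUniformlyOn_const K)
  rw [Metric.tendstoUniformlyOn_iff] at hG ⊢
  intro ε hε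
  filter_upwards [hG ε hε, eventually_gt_atTop 0] with y hy hy0 l hl
  have hl0 : l ≠ 0 := (zero_lt_one.trans_le (hK1 hl)).ne'
  convert hy l hl using 1
  simp only [Pi.sub_apply, Pi.zero_apply, sub_zero, Real.dist_eq]
  congr 1
  field_simp
  ring
end

section
/- Suppose (1/log n)·∑_{⌊n^{1/λ}⌋ < i ≤ n} s_i/(i+1) → (1 - 1/λ)·s as n → ∞ for some fixed λ > 1. Then (1/log n)·∑_{i=0}^n s_i/(i+1) → s as n → ∞, i.e. the sequence is ℓ-summable to s. -/
/-!
With `m n = ⌊n ^ (1/λ)⌋₊` and `aₙ = log (m n) / log n → 1/λ`, splitting the sum at `m n` gives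
`tₙ = aₙ · t_{m n} + dₙ`, so the error `eₙ = tₙ - s` satisfies `eₙ = aₙ · e_{m n} + o(1)`.
Since `m n < n`, strong induction bounds `e`; since `m n → ∞` and `|aₙ|` is eventually below some
`θ < 1`, any eventual bound `B` on `‖e‖` improves to `θ B + δ`, and iterating forces `e → 0`.
-/

open Filter Finset Topology

section Contraction

variable {m : ℕ → ℕ} {θ : ℝ}

lemma exists_forall_le_of_eventually_le_mul_comp_add {u : ℕ → ℝ} {R : ℝ} (hθ0 : 0 ≤ θ)
    (hθ1 : θ < 1) (hm : ∀ᶠ n in atTop, m n < n) (hu : ∀ᶠ n in atTop, u n ≤ θ * u (m n) + R) :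
    ∃ C, ∀ n, u n ≤ C := by
  obtain ⟨N, hN⟩ := eventually_atTop.mp (hm.and hu)
  obtain ⟨C₀, hC₀⟩ := ((Set.finite_Iio N).image u).bddAbove
  refine ⟨max C₀ (R / (1 - θ)), fun n => ?_⟩
  induction n using Nat.strong_induction_on with
  | _ n ih =>
    rcases lt_or_ge n N with hn | hn
    · exact (hC₀ ⟨n, hn, rfl⟩).trans (le_max_left _ _)
    · obtain ⟨hmn, hun⟩ := hN n hn
      have hR : R ≤ (1 - θ) * max C₀ (R / (1 - θ)) := by
        rw [← div_le_iff₀' (by linarith)]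
        exact le_max_right _ _
      nlinarith [ih (m n) hmn]

lemma tendsto_zero_of_eventually_le_mul_comp_add {u r : ℕ → ℝ} (hθ0 : 0 ≤ θ) (hθ1 : θ < 1)
    (hm : Tendsto m atTop atTop) (hmlt : ∀ᶠ n in atTop, m n < n) (hr : Tendsto r atTop (𝓝 0))
    (hu0 : ∀ n, 0 ≤ u n) (hu : ∀ᶠ n in atTop, u n ≤ θ * u (m n) + r n) :
    Tendsto u atTop (𝓝 0) := by
  have hr_le : ∀ δ > 0, ∀ᶠ n in atTop, r n ≤ δ := fun δ hδ => hr.eventually_le_const hδ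
  obtain ⟨C, hC⟩ := exists_forall_le_of_eventually_le_mul_comp_add (R := 1) hθ0 hθ1 hmlt
    ((hu.and (hr_le 1 one_pos)).mono fun n h => by linarith [h.1, h.2])
  have improve : ∀ B δ, (∀ᶠ n in atTop, u n ≤ B) → 0 < δ → ∀ᶠ n in atTop, u n ≤ θ * B + δ := by
    intro B δ hB hδ
    filter_upwards [hu, hm.eventually hB, hr_le δ hδ] with n h1 h2 h3
    nlinarith
  have iterate : ∀ ε > 0, ∀ k : ℕ, ∀ᶠ n in atTop, u n ≤ θ ^ k * C + ε := by
    intro ε hε k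
    induction k with
    | zero => exact Eventually.of_forall fun n => by linarith [hC n]
    | succ k ih =>
      filter_upwards [improve _ (ε * (1 - θ)) ih (by nlinarith)] with n hn
      linarith [show θ * (θ ^ k * C + ε) + ε * (1 - θ) = θ ^ (k + 1) * C + ε by ring]
  refine tendsto_order.2 ⟨fun a ha => Eventually.of_forall fun n => ha.trans_le (hu0 n),
    fun a ha => ?_⟩
  obtain ⟨k, hk⟩ := (((tendsto_pow_atTop_nhds_zero_of_lt_one hθ0 hθ1).mul_const C).eventually
    (gt_mem_nhds (show 0 * C < a / 2 by linarith))).exists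
  filter_upwards [iterate (a / 2) (half_pos ha) k] with n hn
  linarith

lemma tendsto_zero_of_eventually_eq_smul_comp_add {E : Type*} [SeminormedAddCommGroup E]
    [NormedSpace ℝ E] {e r : ℕ → E} {a : ℕ → ℝ} {α : ℝ} (hα : |α| < 1)
    (ha : Tendsto a atTop (𝓝 α)) (hm : Tendsto m atTop atTop) (hmlt : ∀ᶠ n in atTop, m n < n)
    (hr : Tendsto r atTop (𝓝 0)) (he : ∀ᶠ n in atTop, e n = a n • e (m n) + r n) :
    Tendsto e atTop (𝓝 0) := by
  have haθ : ∀ᶠ n in atTop, |a n| ≤ (|α| + 1) / 2 :=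
    ha.abs.eventually_le_const (by linarith)
  rw [tendsto_zero_iff_norm_tendsto_zero] at hr ⊢
  refine tendsto_zero_of_eventually_le_mul_comp_add (θ := (|α| + 1) / 2) (by positivity)
    (by linarith) hm hmlt hr (fun _ => norm_nonneg _) ?_
  filter_upwards [he, haθ] with n hen han
  calc ‖e n‖ ≤ |a n| * ‖e (m n)‖ + ‖r n‖ := by
        simpa [hen, norm_smul] using norm_add_le (a n • e (m n)) (r n)
    _ ≤ (|α| + 1) / 2 * ‖e (m n)‖ + ‖r n‖ := by gcongr

end Contraction

lemma nat_floor_rpow_lt_self {p : ℝ} (hp : p < 1) {n : ℕ} (hn : 1 < n) :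
    ⌊(n : ℝ) ^ p⌋₊ < n := by
  rw [Nat.floor_lt (by positivity)]
  simpa using Real.rpow_lt_rpow_of_exponent_lt (by exact_mod_cast hn : (1 : ℝ) < n) hp

lemma tendsto_nat_floor_rpow_atTop {p : ℝ} (hp : 0 < p) :
    Tendsto (fun n : ℕ => ⌊(n : ℝ) ^ p⌋₊) atTop atTop :=
  tendsto_nat_floor_atTop.comp ((tendsto_rpow_atTop hp).comp tendsto_natCast_atTop_atTop)

lemma tendsto_log_nat_floor_rpow_div_log {p : ℝ} (hp : 0 < p) :
    Tendsto (fun n : ℕ => Real.log ⌊(n : ℝ) ^ p⌋₊ / Real.log n) atTop (𝓝 p) := by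
  have hlog_ratio :
      Tendsto (fun n : ℕ => Real.log (⌊(n : ℝ) ^ p⌋₊ / (n : ℝ) ^ p)) atTop (𝓝 0) := by
    simpa [Function.comp_def] using (Real.continuousAt_log one_ne_zero).tendsto.comp
      (tendsto_nat_floor_div_atTop.comp
        ((tendsto_rpow_atTop hp).comp tendsto_natCast_atTop_atTop))
  have hlim : Tendsto (fun n : ℕ => p + Real.log (⌊(n : ℝ) ^ p⌋₊ / (n : ℝ) ^ p) / Real.log n)
      atTop (𝓝 p) := by
    simpa using (hlog_ratio.div_atTop
      (Real.tendsto_log_atTop.comp tendsto_natCast_atTop_atTop)).const_add p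
  refine hlim.congr' ?_
  filter_upwards [(tendsto_nat_floor_rpow_atTop hp).eventually_ge_atTop 1,
    eventually_gt_atTop 1] with n hfl hn
  have hfl' : (1 : ℝ) ≤ ⌊(n : ℝ) ^ p⌋₊ := by exact_mod_cast hfl
  have hlogn : Real.log n ≠ 0 := (Real.log_pos (by exact_mod_cast hn)).ne'
  rw [Real.log_div (by positivity) (by positivity), Real.log_rpow (by positivity)]
  field_simp
  ring

lemma sum_range_succ_eq_add_sum_Ioc {M : Type*} [AddCommMonoid M] (f : ℕ → M) {m n : ℕ}
    (h : m ≤ n) : ∑ i ∈ range (n + 1), f i = ∑ i ∈ range (m + 1), f i + ∑ i ∈ Ioc m n, f i := by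
  rw [← Finset.Ico_add_one_add_one_eq_Ioc, Finset.sum_range_add_sum_Ico _ (by omega)]

/-- The logarithmic mean `tₙ`. -/
noncomputable def logMean (s : ℕ → ℝ) (n : ℕ) : ℝ :=
  (∑ i ∈ range (n + 1), s i / (i + 1)) / Real.log n

lemma logMean_eq_mul_logMean_add (s : ℕ → ℝ) {m n : ℕ} (hm : 1 < m) (hmn : m ≤ n) :
    logMean s n = Real.log m / Real.log n * logMean s m
      + (∑ i ∈ Ioc m n, s i / (i + 1)) / Real.log n := by
  have hlogm : Real.log m ≠ 0 := (Real.log_pos (by exact_mod_cast hm)).ne'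
  rw [logMean, logMean, sum_range_succ_eq_add_sum_Ioc _ hmn]
  field_simp

/-- If for some fixed `λ > 1` the logarithmic moving average of `(sₙ)` converges to
`(1 - 1/λ)·s`, then `(sₙ)` is ℓ-summable to `s`. -/
theorem log_moving_average_implies_ell (s : ℕ → ℝ) (c : ℝ) (l : ℝ) (hl : 1 < l)
    (hd : Tendsto (fun n : ℕ =>
        (∑ i ∈ Finset.Ioc (⌊(n : ℝ) ^ (1 / l)⌋₊) n, s i / (i + 1)) / Real.log n)
      atTop (nhds ((1 - 1 / l) * c))) :
    Tendsto (fun n : ℕ =>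
        (∑ i ∈ Finset.range (n + 1), s i / (i + 1)) / Real.log n) atTop (nhds c) := by
  have hl₀ : 0 < 1 / l := by positivity
  have hl₁ : 1 / l < 1 := (div_lt_one (by linarith)).2 hl
  have hm := tendsto_nat_floor_rpow_atTop hl₀
  have ha := tendsto_log_nat_floor_rpow_div_log hl₀
  have hr := (hd.sub_const ((1 - 1 / l) * c)).add ((ha.sub_const (1 / l)).const_mul c)
  rw [sub_self, sub_self, mul_zero, add_zero] at hr
  suffices Tendsto (fun n => logMean s n - c) atTop (𝓝 0) by
    simpa [logMean] using this.add_const c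
  refine tendsto_zero_of_eventually_eq_smul_comp_add (abs_lt.2 ⟨by linarith, hl₁⟩) ha hm
    ((eventually_gt_atTop 1).mono fun n hn => nat_floor_rpow_lt_self hl₁ hn) hr ?_
  filter_upwards [hm.eventually_gt_atTop 1, eventually_gt_atTop 1] with n hmn hn
  rw [logMean_eq_mul_logMean_add s hmn (nat_floor_rpow_lt_self hl₁ hn).le, smul_eq_mul]
  ring
end

section
/- For the principal branch of the Lambert W function, e^{W(z)} ~ z/log z as z → ∞, i.e. lim_{z→∞} e^{W(z)}·log(z)/z = 1. -/
open Filter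

/-!
Writing `w = W z`, the defining equation `z = w e^w` gives `log z = w + log w`, hence
`e^w log z / z = 1 + log w / w`. Since `log z ≤ 2w`, `W z → ∞`, and `log w / w → 0`.
-/

namespace Real

lemma log_mul_exp_le {w : ℝ} (hw : 0 ≤ w) : log (w * exp w) ≤ 2 * w := by
  rcases hw.eq_or_lt with rfl | hw
  · simp
  rw [log_mul hw.ne' (exp_ne_zero w), log_exp]
  linarith [log_le_sub_one_of_pos hw]

lemma exp_mul_log_div_mul_exp {w : ℝ} (hw : 0 < w) :
    exp w * log (w * exp w) / (w * exp w) = 1 + log w / w := by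
  rw [log_mul hw.ne' (exp_ne_zero w), log_exp]
  field_simp
  ring

lemma tendsto_exp_mul_log_div_mul_exp_atTop :
    Tendsto (fun w => exp w * log (w * exp w) / (w * exp w)) atTop (nhds 1) := by
  have hlog : Tendsto (fun w => 1 + log w / w) atTop (nhds (1 + 0)) :=
    tendsto_const_nhds.add isLittleO_log_id_atTop.tendsto_div_nhds_zero
  rw [add_zero] at hlog
  refine hlog.congr' ?_
  filter_upwards [eventually_gt_atTop 0] with w hw
  exact (exp_mul_log_div_mul_exp hw).symm

lemma tendsto_atTop_of_mul_exp_eq {W : ℝ → ℝ} (hW : ∀ z, 0 ≤ z → 0 ≤ W z ∧ W z * exp (W z) = z) :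
    Tendsto W atTop atTop := by
  refine tendsto_atTop_mono' atTop ?_ (tendsto_log_atTop.atTop_div_const two_pos)
  filter_upwards [eventually_ge_atTop 0] with z hz
  obtain ⟨hW0, hWz⟩ := hW z hz
  have := log_mul_exp_le hW0
  rw [hWz] at this
  linarith

end Real

/-- For the principal branch of the Lambert W function, `e^{W(z)} ~ z / log z` as
`z → ∞`, i.e. `e^{W(z)}·log z / z → 1`. -/
theorem exp_lambertW_asymptotic (W : ℝ → ℝ)
    (hW : ∀ z, 0 ≤ z → 0 ≤ W z ∧ W z * Real.exp (W z) = z) :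
    Tendsto (fun z : ℝ => Real.exp (W z) * Real.log z / z) atTop (nhds 1) := by
  refine (Real.tendsto_exp_mul_log_div_mul_exp_atTop.comp
    (Real.tendsto_atTop_of_mul_exp_eq hW)).congr' ?_
  filter_upwards [eventually_ge_atTop 0] with z hz
  simp only [Function.comp_apply, (hW z hz).2]
end

section
/- For a random variable X, the conditions E[e^{W(|X|)}] < ∞ and E[|X|/(1 + log₊|X|)] < ∞ are equivalent, where W is the Lambert W function and log₊ t = max(log t, 0). -/
/-!
Write `w = W(z)`, so that `z = w e^w` and `log z = w + log w ≤ 2w - 1`. Hence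
`w ≤ 1 + log₊ z` (trivially when `w ≤ 1`), which gives `z / (1 + log₊ z) ≤ e^w`, and, once
`w ≥ 1`, also `1 + log₊ z ≤ 2w`, which gives `e^w = z / w ≤ 2 z / (1 + log₊ z)`. So `e^{W(|X|)}`
and `|X| / (1 + log₊ |X|)` are comparable up to a constant factor and an additive constant,
which does not affect integrability under a finite measure.
-/

open MeasureTheory Real Set

theorem Real.strictMonoOn_mul_exp : StrictMonoOn (fun w => w * exp w) (Ici 0) :=
  fun a ha _ _ hab => mul_lt_mul'' hab (exp_lt_exp.2 hab) ha (exp_pos a).le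

def IsLambertW (W : ℝ → ℝ) : Prop :=
  ∀ z, 0 ≤ z → 0 ≤ W z ∧ W z * exp (W z) = z

namespace IsLambertW

variable {W : ℝ → ℝ} (hW : IsLambertW W) {z : ℝ}
include hW

theorem nonneg (hz : 0 ≤ z) : 0 ≤ W z := (hW z hz).1

theorem mul_exp_self (hz : 0 ≤ z) : W z * exp (W z) = z := (hW z hz).2

theorem le_iff_le {a b : ℝ} (ha : 0 ≤ a) (hb : 0 ≤ b) : W a ≤ W b ↔ a ≤ b := by
  rw [← strictMonoOn_mul_exp.le_iff_le (hW.nonneg ha) (hW.nonneg hb)]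
  simp only [hW.mul_exp_self ha, hW.mul_exp_self hb]

theorem monotoneOn : MonotoneOn W (Ici 0) :=
  fun _ ha _ hb hab => (hW.le_iff_le ha hb).2 hab

theorem measurable_comp_abs : Measurable fun x => W |x| := by
  have hmono : Monotone fun x => W (max x 0) := fun a b hab =>
    hW.monotoneOn (le_max_right a 0) (le_max_right b 0) (max_le_max_right 0 hab)
  have hcomp : (fun x => W |x|) = (fun x => W (max x 0)) ∘ abs := by
    ext x
    simp [abs_nonneg]
  rw [hcomp]
  exact hmono.measurable.comp measurable_abs

theorem log_eq_add_log (hz : 0 ≤ z) (hw : 0 < W z) : log z = W z + log (W z) := by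
  conv_lhs => rw [← hW.mul_exp_self hz]
  rw [log_mul hw.ne' (exp_ne_zero _), log_exp, add_comm]

theorem le_one_add_posLog (hz : 0 ≤ z) : W z ≤ 1 + max (log z) 0 := by
  rcases le_or_gt (W z) 1 with hw | hw
  · linarith [le_max_right (log z) 0]
  · have hlog := hW.log_eq_add_log hz (one_pos.trans hw)
    linarith [le_max_left (log z) 0, log_nonneg hw.le]

theorem one_add_posLog_le (hz : 0 ≤ z) (hw : 1 ≤ W z) : 1 + max (log z) 0 ≤ 2 * W z := by
  have hlog := hW.log_eq_add_log hz (one_pos.trans_le hw)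
  have hlogw := log_le_sub_one_of_pos (one_pos.trans_le hw)
  have : max (log z) 0 ≤ 2 * W z - 1 := max_le (by linarith) (by linarith)
  linarith

theorem div_one_add_posLog_le_exp (hz : 0 ≤ z) : z / (1 + max (log z) 0) ≤ exp (W z) := by
  rw [div_le_iff₀ (by positivity)]
  conv_lhs => rw [← hW.mul_exp_self hz]
  rw [mul_comm]
  exact mul_le_mul_of_nonneg_left (hW.le_one_add_posLog hz) (exp_pos _).le

theorem exp_le (hz : 0 ≤ z) : exp (W z) ≤ 2 * (z / (1 + max (log z) 0)) + exp 1 := by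
  rcases le_total (W z) 1 with hw | hw
  · have : 0 ≤ 2 * (z / (1 + max (log z) 0)) := by positivity
    linarith [exp_le_exp.2 hw]
  · have hbound : exp (W z) ≤ 2 * (z / (1 + max (log z) 0)) := by
      rw [mul_div_assoc', le_div_iff₀ (by positivity)]
      calc exp (W z) * (1 + max (log z) 0) ≤ exp (W z) * (2 * W z) :=
            mul_le_mul_of_nonneg_left (hW.one_add_posLog_le hz hw) (exp_pos _).le
        _ = 2 * z := by linear_combination 2 * hW.mul_exp_self hz
    linarith [exp_pos 1]

end IsLambertW

theorem MeasureTheory.integrable_iff_of_le_of_le_mul_add {Ω : Type*} [MeasurableSpace Ω]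
    {μ : Measure Ω} [IsFiniteMeasure μ] {f g : Ω → ℝ} (a b : ℝ)
    (hf : AEStronglyMeasurable f μ) (hg : AEStronglyMeasurable g μ) (hg_nonneg : ∀ ω, 0 ≤ g ω)
    (hgf : ∀ ω, g ω ≤ f ω) (hfg : ∀ ω, f ω ≤ a * g ω + b) :
    Integrable f μ ↔ Integrable g μ := by
  refine ⟨fun hfi => hfi.mono' hg (ae_of_all _ fun ω => ?_),
    fun hgi => ((hgi.const_mul a).add (integrable_const b)).mono' hf (ae_of_all _ fun ω => ?_)⟩
  · rw [norm_of_nonneg (hg_nonneg ω)]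
    exact hgf ω
  · rw [norm_of_nonneg ((hg_nonneg ω).trans (hgf ω))]
    exact hfg ω

/-- For a random variable `X`, the moment conditions `E[e^{W(|X|)}] < ∞` and
`E[|X|/(1 + log₊ |X|)] < ∞` are equivalent, where `W` is the Lambert W function. -/
theorem exp_lambertW_integrable_iff {Ω : Type*} [MeasureSpace Ω]
    [IsProbabilityMeasure (volume : Measure Ω)]
    (W : ℝ → ℝ) (hW : ∀ z, 0 ≤ z → 0 ≤ W z ∧ W z * Real.exp (W z) = z)
    (X : Ω → ℝ) (hX : Measurable X) :
    Integrable (fun ω => Real.exp (W |X ω|)) ↔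
      Integrable (fun ω => |X ω| / (1 + max (Real.log |X ω|) 0)) := by
  have hW : IsLambertW W := hW
  refine integrable_iff_of_le_of_le_mul_add 2 (exp 1)
    ((measurable_exp.comp (hW.measurable_comp_abs.comp hX)).aestronglyMeasurable)
    (Measurable.aestronglyMeasurable (by fun_prop)) (fun ω => by positivity)
    (fun ω => hW.div_one_add_posLog_le_exp (abs_nonneg _))
    (fun ω => hW.exp_le (abs_nonneg _))
end

section
/- The von Mangoldt function satisfies ∑_{n ≤ x} Λ(n)/n ~ log x as x → ∞; equivalently, Λ is ℓ_x-summable to 1. -/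
/-!
Summing `log = Λ * ζ` up to `N` gives Chebyshev's identity `log N! = ∑_{n ≤ N} Λ(n) ⌊N/n⌋`.
Replacing `⌊N/n⌋` by `N/n` changes the right-hand side by at most `ψ(N) = O(N)`, and
`log N! = N log N + O(N)` by Stirling, so `∑_{n ≤ N} Λ(n)/n = log N + O(1)` (Mertens' first
theorem). Since `log ⌊x⌋ = log x + O(1)` and `log x → ∞`, the quotient tends to `1`.
-/

open Filter Finset Real Asymptotics
open ArithmeticFunction hiding log
open scoped Nat Chebyshev

namespace Real

theorem sum_Ioc_log_eq_log_factorial (N : ℕ) : ∑ n ∈ Ioc 0 N, log n = log N ! := by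
  induction N with
  | zero => simp
  | succ N ih =>
    rw [sum_Ioc_succ_top N.zero_le, ih, Nat.factorial_succ, Nat.cast_mul,
      log_mul (by positivity) (by positivity), add_comm]

theorem abs_log_natFloor_sub_log_le_log_two {x : ℝ} (hx : 1 ≤ x) :
    |log ⌊x⌋₊ - log x| ≤ log 2 := by
  have hfloor : (1 : ℝ) ≤ ⌊x⌋₊ := by exact_mod_cast (Nat.one_le_floor_iff x).mpr hx
  have hle : log ⌊x⌋₊ ≤ log x := log_le_log (by positivity) (Nat.floor_le (by positivity))
  have hle_two_mul : log x ≤ log 2 + log ⌊x⌋₊ := by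
    rw [← log_mul two_ne_zero (by positivity)]
    exact log_le_log (by positivity) (by linarith [Nat.lt_floor_add_one x])
  rw [abs_of_nonpos (sub_nonpos.mpr hle)]
  linarith

end Real

namespace ArithmeticFunction

theorem sum_Ioc_vonMangoldt_mul_div_eq_log_factorial (N : ℕ) :
    ∑ n ∈ Ioc 0 N, Λ n * ((N / n : ℕ) : ℝ) = Real.log N ! := by
  rw [← sum_Ioc_mul_zeta_eq_sum, vonMangoldt_mul_zeta, ← sum_Ioc_log_eq_log_factorial]
  simp only [log_apply]

theorem log_factorial_le_mul_sum_vonMangoldt_div (N : ℕ) :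
    Real.log N ! ≤ N * ∑ n ∈ Ioc 0 N, Λ n / n := by
  rw [← sum_Ioc_vonMangoldt_mul_div_eq_log_factorial, mul_sum]
  refine sum_le_sum fun n _ ↦ ?_
  calc Λ n * ((N / n : ℕ) : ℝ) ≤ Λ n * (N / n) := by gcongr; exact Nat.cast_div_le
    _ = N * (Λ n / n) := by ring

theorem mul_sum_vonMangoldt_div_le_log_factorial_add_psi (N : ℕ) :
    N * ∑ n ∈ Ioc 0 N, Λ n / n ≤ Real.log N ! + ψ N := by
  rw [← sum_Ioc_vonMangoldt_mul_div_eq_log_factorial, Chebyshev.psi, Nat.floor_natCast,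
    ← sum_add_distrib, mul_sum]
  refine sum_le_sum fun n hn ↦ ?_
  have hn : 0 < n := (mem_Ioc.mp hn).1
  have hdiv : (N : ℝ) / n ≤ ((N / n : ℕ) : ℝ) + 1 := by
    rw [div_le_iff₀ (by exact_mod_cast hn)]
    exact_mod_cast (add_one_mul (N / n) n ▸ Nat.lt_div_mul_add hn).le
  calc (N : ℝ) * (Λ n / n) = Λ n * (N / n) := by ring
    _ ≤ Λ n * (((N / n : ℕ) : ℝ) + 1) := by gcongr
    _ = Λ n * ((N / n : ℕ) : ℝ) + Λ n := by ring

theorem abs_sum_vonMangoldt_div_sub_log_le (N : ℕ) :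
    |∑ n ∈ Ioc 0 N, Λ n / n - Real.log N| ≤ Real.log 4 + 4 := by
  rcases N.eq_zero_or_pos with rfl | hN
  · simp only [Ioc_self, sum_empty, Nat.cast_zero, Real.log_zero, sub_self, abs_zero]
    positivity
  have hN' : (0 : ℝ) < N := by exact_mod_cast hN
  have hstirling : N * Real.log N - N ≤ Real.log N ! := by
    have h := Stirling.le_log_factorial_stirling hN.ne'
    have h2π : 0 ≤ Real.log (2 * π) := Real.log_nonneg (by linarith [pi_gt_three])
    linarith [Real.log_natCast_nonneg N]
  have hpow : Real.log N ! ≤ N * Real.log N := by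
    rw [← Real.log_pow]
    gcongr
    exact_mod_cast Nat.factorial_le_pow N
  have hψ := Chebyshev.psi_le_const_mul_self hN'.le
  have hlower := log_factorial_le_mul_sum_vonMangoldt_div N
  have hupper := mul_sum_vonMangoldt_div_le_log_factorial_add_psi N
  have hlog4 : 0 ≤ Real.log 4 := Real.log_nonneg (by norm_num)
  rw [abs_le]
  constructor <;> nlinarith

theorem sum_vonMangoldt_div_sub_log_isBigO_one :
    (fun x : ℝ ↦ ∑ n ∈ Ioc 0 ⌊x⌋₊, Λ n / n - Real.log x) =O[atTop] fun _ ↦ (1 : ℝ) := by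
  refine .of_bound (Real.log 4 + 4 + Real.log 2) ?_
  filter_upwards [eventually_ge_atTop 1] with x hx
  rw [norm_one, mul_one, Real.norm_eq_abs]
  calc |∑ n ∈ Ioc 0 ⌊x⌋₊, Λ n / n - Real.log x|
      ≤ |∑ n ∈ Ioc 0 ⌊x⌋₊, Λ n / n - Real.log ⌊x⌋₊| + |Real.log ⌊x⌋₊ - Real.log x| :=
        abs_sub_le _ _ _
    _ ≤ Real.log 4 + 4 + Real.log 2 :=
        add_le_add (abs_sum_vonMangoldt_div_sub_log_le _) (abs_log_natFloor_sub_log_le_log_two hx)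

end ArithmeticFunction

/-- The von Mangoldt function satisfies `∑_{n ≤ x} Λ(n)/n ~ log x` as `x → ∞`,
i.e. `Λ` is `ℓₓ`-summable to 1. -/
theorem vonMangoldt_log_average_tendsto_one :
    Tendsto
      (fun x : ℝ =>
        (∑ n ∈ Finset.Icc 1 ⌊x⌋₊, ArithmeticFunction.vonMangoldt n / n) / Real.log x)
      atTop (nhds 1) := by
  have hequiv : (fun x : ℝ ↦ ∑ n ∈ Ioc 0 ⌊x⌋₊, Λ n / n) ~[atTop] Real.log :=
    sum_vonMangoldt_div_sub_log_isBigO_one.trans_isLittleO isLittleO_const_log_atTop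
  have hlog : ∀ᶠ x in atTop, Real.log x ≠ 0 := by
    filter_upwards [eventually_gt_atTop 1] with x hx using (Real.log_pos hx).ne'
  simp_rw [show ∀ N : ℕ, Icc 1 N = Ioc 0 N from Icc_add_one_left_eq_Ioc 0]
  exact (isEquivalent_iff_tendsto_one hlog).1 hequiv
end

section
/- If a sequence (s_n) satisfies (1/log n)·∑_{i=0}^n s_i/(i+1) → s (ℓ-summability), then (1/(-log(1-x)))·∑_{i=0}^∞ s_i·x^{i+1}/(i+1) → s as x ↑ 1 (L-summability), provided the power series ∑ s_i x^{i+1}/(i+1) converges for |x| < 1. -/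
/-!
Put `Aₙ = ∑_{i ≤ n} sᵢ/(i+1)` and `pₙ = ∑_{i ≤ n} 1/(i+1)`, the harmonic number `H_{n+1}`.
Abel summation gives `∑ sᵢ x^(i+1)/(i+1) = x(1-x) ∑ Aₙ xⁿ` and `-log(1-x) = x(1-x) ∑ pₙ xⁿ`,
so the L-mean at `x` is `∑ Aₙ xⁿ / ∑ pₙ xⁿ`. Since `pₙ ~ log n`, ℓ-summability says
`Aₙ/pₙ → c`. As `∑ pₙ` diverges, `∑ pₙ xⁿ → ∞` when `x → 1⁻`, so the finitely many indices where
`Aₙ/pₙ` is far from `c` are swamped and the ratio of the two power series tends to `c`.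
-/

open Filter Finset Asymptotics Topology

theorem HasSum.mul_pow_of_partialSum_mul_pow {R : Type*} [CommRing R] [TopologicalSpace R]
    [IsTopologicalRing R] {f : ℕ → R} {x S : R}
    (h : HasSum (fun n => (∑ i ∈ range (n + 1), f i) * x ^ n) S) :
    HasSum (fun n => f n * x ^ n) ((1 - x) * S) := by
  have hshift : HasSum (fun n => (∑ i ∈ range n, f i) * x ^ n) (x * S) := by
    have := HasSum.zero_add (f := fun n => (∑ i ∈ range n, f i) * x ^ n)
      ((h.mul_left x).congr_fun fun n => by ring)
    simpa using this
  rw [one_sub_mul]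
  exact (h.sub hshift).congr_fun fun n => by rw [sum_range_succ]; ring

theorem summable_mul_pow_of_isBigO {e p : ℕ → ℝ} {x : ℝ} (he : e =O[atTop] p)
    (hp : Summable fun n => p n * x ^ n) : Summable fun n => e n * x ^ n := by
  obtain ⟨C, hC⟩ := he.bound
  refine .of_norm_bounded_eventually_nat (hp.norm.mul_left C) ?_
  filter_upwards [hC] with n hn
  rw [norm_mul, norm_mul, ← mul_assoc]
  exact mul_le_mul_of_nonneg_right hn (norm_nonneg _)

section WeightedAbelMean

variable {p : ℕ → ℝ}

theorem tendsto_tsum_mul_pow_nhdsLT_one_atTop (hp : ∀ n, 0 ≤ p n) (hps : ¬Summable p)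
    (hpx : ∀ x ∈ Set.Ioo (0 : ℝ) 1, Summable fun n => p n * x ^ n) :
    Tendsto (fun x => ∑' n, p n * x ^ n) (𝓝[<] 1) atTop := by
  refine tendsto_atTop.2 fun K => ?_
  obtain ⟨N, hN⟩ :=
    (((not_summable_iff_tendsto_nat_atTop_of_nonneg hp).1 hps).eventually_gt_atTop K).exists
  have hpartial : Tendsto (fun x : ℝ => ∑ n ∈ range N, p n * x ^ n) (𝓝[<] 1)
      (𝓝 (∑ n ∈ range N, p n)) := by
    have hcont : Continuous fun x : ℝ => ∑ n ∈ range N, p n * x ^ n := by fun_prop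
    simpa using (hcont.tendsto 1).mono_left nhdsWithin_le_nhds
  filter_upwards [hpartial.eventually (eventually_gt_nhds hN),
    Ioo_mem_nhdsLT (show (0 : ℝ) < 1 by norm_num)] with x hKx hx
  exact hKx.le.trans <|
    (hpx x hx).sum_le_tsum _ fun n _ => mul_nonneg (hp n) (pow_nonneg hx.1.le n)

theorem abs_tsum_mul_pow_le {e : ℕ → ℝ} {x ε : ℝ} {N : ℕ} (hp : ∀ n, 0 ≤ p n) (hε : 0 ≤ ε)
    (hx : x ∈ Set.Icc (0 : ℝ) 1) (hpx : Summable fun n => p n * x ^ n)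
    (hN : ∀ n ≥ N, |e n| ≤ ε * p n) :
    |∑' n, e n * x ^ n| ≤ ∑ n ∈ range N, |e n| + ε * ∑' n, p n * x ^ n := by
  have hhead : HasSum (fun n => if n < N then |e n| else 0) (∑ n ∈ range N, |e n|) := by
    have : HasSum (fun n => if n < N then |e n| else 0)
        (∑ n ∈ range N, if n < N then |e n| else 0) :=
      hasSum_sum_of_ne_finset_zero fun n hn => if_neg (by simpa using hn)
    rwa [sum_congr rfl fun n hn => if_pos (mem_range.1 hn)] at this
  have hbound : ∀ n, |e n * x ^ n| ≤ (if n < N then |e n| else 0) + ε * (p n * x ^ n) := by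
    intro n
    have hxn : 0 ≤ x ^ n := pow_nonneg hx.1 n
    rw [abs_mul, abs_of_nonneg hxn]
    split_ifs with hn
    · exact le_add_of_le_of_nonneg
        (mul_le_of_le_one_right (abs_nonneg _) (pow_le_one₀ hx.1 hx.2))
        (mul_nonneg hε (mul_nonneg (hp n) hxn))
    · rw [zero_add, ← mul_assoc]
      exact mul_le_mul_of_nonneg_right (hN n (not_lt.1 hn)) hxn
  have hsum := hhead.add (hpx.hasSum.mul_left ε)
  have habs : Summable fun n => |e n * x ^ n| :=
    .of_nonneg_of_le (fun n => abs_nonneg _) hbound hsum.summable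
  have htri : |∑' n, e n * x ^ n| ≤ ∑' n, |e n * x ^ n| := by
    simpa only [Real.norm_eq_abs] using norm_tsum_le_tsum_norm (f := fun n => e n * x ^ n)
      (by simpa only [Real.norm_eq_abs] using habs)
  exact htri.trans (hasSum_le hbound habs.hasSum hsum)

theorem isLittleO_tsum_mul_pow {e : ℕ → ℝ} (hp : ∀ n, 0 ≤ p n) (hps : ¬Summable p)
    (hpx : ∀ x ∈ Set.Ioo (0 : ℝ) 1, Summable fun n => p n * x ^ n) (he : e =o[atTop] p) :
    (fun x => ∑' n, e n * x ^ n) =o[𝓝[<] 1] fun x => ∑' n, p n * x ^ n := by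
  refine IsLittleO.of_bound fun ε hε => ?_
  obtain ⟨N, hN⟩ := eventually_atTop.1 (he.bound (half_pos hε))
  set C := ∑ n ∈ range N, |e n|
  filter_upwards [Ioo_mem_nhdsLT (show (0 : ℝ) < 1 by norm_num),
    (tendsto_tsum_mul_pow_nhdsLT_one_atTop hp hps hpx).eventually_ge_atTop (2 * C / ε)]
    with x hx hCx
  have hD : 0 ≤ ∑' n, p n * x ^ n :=
    tsum_nonneg fun n => mul_nonneg (hp n) (pow_nonneg hx.1.le n)
  have hbound := abs_tsum_mul_pow_le hp (half_pos hε).le (Set.Ioo_subset_Icc_self hx) (hpx x hx)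
    (e := e) (N := N) fun n hn => by simpa [abs_of_nonneg (hp n)] using hN n hn
  have hC : C ≤ ε / 2 * ∑' n, p n * x ^ n := by
    rw [div_le_iff₀ hε] at hCx
    linarith
  rw [Real.norm_eq_abs, Real.norm_eq_abs, abs_of_nonneg hD]
  linarith

theorem tendsto_tsum_mul_pow_div_tsum_mul_pow {a : ℕ → ℝ} {c : ℝ} (hp : ∀ n, 0 < p n)
    (hps : ¬Summable p) (hpx : ∀ x ∈ Set.Ioo (0 : ℝ) 1, Summable fun n => p n * x ^ n)
    (ha : Tendsto (fun n => a n / p n) atTop (𝓝 c)) :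
    Tendsto (fun x => (∑' n, a n * x ^ n) / ∑' n, p n * x ^ n) (𝓝[<] 1) (𝓝 c) := by
  set e := fun n => a n - c * p n
  have he : e =o[atTop] p := by
    refine (isLittleO_iff_tendsto fun n hn => absurd hn (hp n).ne').2 ?_
    simpa [e, sub_div, mul_div_assoc, div_self (hp _).ne'] using ha.sub_const c
  have hsplit : ∀ x ∈ Set.Ioo (0 : ℝ) 1,
      ∑' n, a n * x ^ n = c * ∑' n, p n * x ^ n + ∑' n, e n * x ^ n := by
    intro x hx
    rw [← tsum_mul_left, ← ((hpx x hx).mul_left c).tsum_add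
      (summable_mul_pow_of_isBigO he.isBigO (hpx x hx))]
    exact tsum_congr fun n => by ring
  have hlim := (tendsto_const_nhds (x := c)).add
    (isLittleO_tsum_mul_pow (fun n => (hp n).le) hps hpx he).tendsto_div_nhds_zero
  rw [add_zero] at hlim
  refine hlim.congr' ?_
  filter_upwards [Ioo_mem_nhdsLT (show (0 : ℝ) < 1 by norm_num),
    (tendsto_tsum_mul_pow_nhdsLT_one_atTop (fun n => (hp n).le) hps hpx).eventually_gt_atTop 0]
    with x hx hD
  rw [hsplit x hx, add_div, mul_div_cancel_right₀ _ hD.ne']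

end WeightedAbelMean

theorem isEquivalent_harmonic_succ_log :
    (fun n : ℕ => (harmonic (n + 1) : ℝ)) ~[atTop] fun n => Real.log n := by
  have hsub : Tendsto (fun n : ℕ => (harmonic (n + 1) : ℝ) - Real.log n) atTop
      (𝓝 Real.eulerMascheroniConstant) := by
    have h := ((tendsto_add_atTop_iff_nat 1).2 Real.tendsto_harmonic_sub_log).add
      Real.tendsto_log_nat_add_one_sub_log
    rw [add_zero] at h
    exact h.congr fun n => by push_cast; ring
  have hlog : Tendsto (fun n : ℕ => ‖Real.log n‖) atTop atTop :=
    tendsto_norm_atTop_atTop.comp (Real.tendsto_log_atTop.comp tendsto_natCast_atTop_atTop)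
  exact (hsub.isBigO_one ℝ).trans_isLittleO ((isLittleO_one_left_iff ℝ).2 hlog)

theorem summable_harmonic_succ_mul_pow {x : ℝ} (hx : x ∈ Set.Ioo (0 : ℝ) 1) :
    Summable fun n : ℕ => (harmonic (n + 1) : ℝ) * x ^ n := by
  have hlog_le_id : (fun n : ℕ => Real.log n) =O[atTop] fun n : ℕ => (n : ℝ) :=
    Real.isLittleO_log_id_atTop.isBigO.comp_tendsto tendsto_natCast_atTop_atTop
  refine summable_mul_pow_of_isBigO (isEquivalent_harmonic_succ_log.isBigO.trans hlog_le_id) ?_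
  simpa using summable_pow_mul_geometric_of_norm_lt_one 1 (by simpa [abs_of_pos hx.1] using hx.2)

theorem neg_log_one_sub_eq_mul_tsum_harmonic {x : ℝ} (hx : x ∈ Set.Ioo (0 : ℝ) 1) :
    -Real.log (1 - x) = x * (1 - x) * ∑' n : ℕ, (harmonic (n + 1) : ℝ) * x ^ n := by
  have hH : HasSum (fun n => (∑ i ∈ range (n + 1), ((i : ℝ) + 1)⁻¹) * x ^ n)
      (∑' n : ℕ, (harmonic (n + 1) : ℝ) * x ^ n) :=
    (summable_harmonic_succ_mul_pow hx).hasSum.congr_fun fun n => by simp [harmonic]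
  refine (Real.hasSum_pow_div_log_of_abs_lt_one (by simpa [abs_of_pos hx.1] using hx.2)).unique ?_
  rw [mul_assoc]
  exact (hH.mul_pow_of_partialSum_mul_pow.mul_left x).congr_fun fun i => by ring

theorem ell_implies_L_general (s : ℕ → ℝ) (c : ℝ)
    (hl : Tendsto (fun n : ℕ =>
        (∑ i ∈ Finset.range (n + 1), s i / (i + 1)) / Real.log n) atTop (nhds c)) :
    Tendsto
      (fun x : ℝ => (∑' i : ℕ, s i * x ^ (i + 1) / (i + 1)) / (-Real.log (1 - x)))
      (nhdsWithin 1 (Set.Iio 1)) (nhds c) := by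
  set A : ℕ → ℝ := fun n => ∑ i ∈ range (n + 1), s i / (i + 1)
  set p : ℕ → ℝ := fun n => harmonic (n + 1)
  have hp : ∀ n, 0 < p n := fun n => Rat.cast_pos.2 (harmonic_pos n.succ_ne_zero)
  have hps : ¬Summable p := fun h => not_tendsto_atTop_of_tendsto_nhds h.tendsto_atTop_zero
    (isEquivalent_harmonic_succ_log.symm.tendsto_atTop
      (Real.tendsto_log_atTop.comp tendsto_natCast_atTop_atTop))
  have hAp : Tendsto (fun n => A n / p n) atTop (𝓝 c) :=
    (IsEquivalent.refl.div isEquivalent_harmonic_succ_log).symm.tendsto_nhds hl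
  have hApO : A =O[atTop] p := isBigO_of_div_tendsto_nhds (by simp [(hp _).ne']) c hAp
  refine (tendsto_tsum_mul_pow_div_tsum_mul_pow hp hps
    (fun x hx => summable_harmonic_succ_mul_pow hx) hAp).congr' ?_
  filter_upwards [Ioo_mem_nhdsLT (show (0 : ℝ) < 1 by norm_num)] with x hx
  have hnum : HasSum (fun i => s i * x ^ (i + 1) / (i + 1)) (x * (1 - x) * ∑' n, A n * x ^ n) := by
    rw [mul_assoc]
    exact ((summable_mul_pow_of_isBigO hApO (summable_harmonic_succ_mul_pow hx)).hasSum
      |>.mul_pow_of_partialSum_mul_pow.mul_left x).congr_fun fun i => by ring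
  rw [hnum.tsum_eq, neg_log_one_sub_eq_mul_tsum_harmonic hx,
    mul_div_mul_left _ _ (mul_ne_zero hx.1.ne' (sub_ne_zero.2 hx.2.ne'))]

/-- Abelian implication ℓ ⇒ L: if `(sₙ)` is ℓ-summable to `s` and the power series
`∑ sᵢ x^(i+1)/(i+1)` converges for `|x| < 1`, then `(sₙ)` is L-summable to `s`. -/
theorem ell_implies_L (s : ℕ → ℝ) (c : ℝ)
    (hconv : ∀ x : ℝ, |x| < 1 → Summable (fun i : ℕ => s i * x ^ (i + 1) / (i + 1)))
    (hl : Tendsto (fun n : ℕ =>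
        (∑ i ∈ Finset.range (n + 1), s i / (i + 1)) / Real.log n) atTop (nhds c)) :
    Tendsto
      (fun x : ℝ => (∑' i : ℕ, s i * x ^ (i + 1) / (i + 1)) / (-Real.log (1 - x)))
      (nhdsWithin 1 (Set.Iio 1)) (nhds c) :=
  ell_implies_L_general s c hl
end

section
/- Let X, X_1, X_2, … be i.i.d. real random variables with E[|X|/(1 + log₊|X|)] < ∞, and set m_k := E[X_k·1_{|X_k| ≤ (k+1)log(k+1)}]. Then (1/((n+1)log(n+1)))·∑_{i=1}^n (X_i - m_i) → 0 almost surely as n → ∞. -/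
/-!
Truncate `X k` at level `φ k = (k + 1) log (k + 1)`, writing `Y k` for the truncation.
Since `#{k | φ k < t} ≤ 4 t / (1 + log₊ t) + 4`, the moment hypothesis gives
`∑ P(|X k| > φ k) < ∞`, so by Borel–Cantelli almost surely `X k = Y k` for all large `k`.
Summing `t² / φ(k)²` over the `k` with `φ k ≥ t` gives at most `6 t / (1 + log₊ t) + 4`, so the
same hypothesis bounds `∑ Var(Y k / φ k)`. The partial sums of `(Y k - m k) / φ k` then form an
`L²`-bounded martingale, hence converge almost surely, and Kronecker's lemma turns this into
`(∑_{k ≤ n} (Y k - m k)) / φ n → 0`.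
-/

open MeasureTheory Filter ProbabilityTheory Finset Topology Real Asymptotics
open scoped ENNReal

/-- Kronecker's lemma. -/
theorem tendsto_inv_smul_sum_smul_of_tendsto_sum {E : Type*} [NormedAddCommGroup E]
    [NormedSpace ℝ E] {b : ℕ → ℝ} {z : ℕ → E} {l : E} (hmono : Monotone b)
    (hb : Tendsto b atTop atTop) (hz : Tendsto (fun n ↦ ∑ k ∈ range n, z k) atTop (𝓝 l)) :
    Tendsto (fun n ↦ (b n)⁻¹ • ∑ k ∈ range (n + 1), b k • z k) atTop (𝓝 0) := by
  set v : ℕ → E := fun i ↦ ∑ k ∈ range (i + 1), z k - l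
  have hv : Tendsto v atTop (𝓝 0) := by
    simpa [v] using (hz.comp (tendsto_add_atTop_nat 1)).sub_const l
  have hsum_diff : ∀ n, ∑ i ∈ range n, (b (i + 1) - b i) = b n - b 0 := sum_range_sub b
  have abel : ∀ n, ∑ k ∈ range (n + 1), b k • z k
      = b n • v n + b 0 • l - ∑ i ∈ range n, (b (i + 1) - b i) • v i := by
    intro n
    simp only [v, sum_range_by_parts b z (n + 1), add_tsub_cancel_right, smul_sub, sum_sub_distrib,
      ← sum_smul, hsum_diff]
    module
  have hW : (fun n ↦ ∑ i ∈ range n, (b (i + 1) - b i) • v i) =o[atTop] b := by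
    have hterm : (fun i ↦ (b (i + 1) - b i) • v i) =o[atTop] fun i ↦ b (i + 1) - b i := by
      simpa using (isBigO_refl (fun i ↦ b (i + 1) - b i) atTop).smul_isLittleO
        ((isLittleO_one_iff ℝ).2 hv)
    have hsum := hterm.sum_range (fun i ↦ sub_nonneg.2 (hmono i.le_succ))
      (by simp only [hsum_diff]; exact tendsto_atTop_add_const_right _ _ hb)
    simp only [hsum_diff] at hsum
    refine hsum.trans_isBigO ((isBigO_refl b atTop).sub ?_)
    exact (isLittleO_const_left.2 (Or.inr (tendsto_norm_atTop_atTop.comp hb))).isBigO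
  have hlim : Tendsto (fun n ↦ v n + (b n)⁻¹ • b 0 • l
      - (b n)⁻¹ • ∑ i ∈ range n, (b (i + 1) - b i) • v i) atTop (𝓝 0) := by
    simpa using (hv.add ((tendsto_inv_atTop_zero.comp hb).smul_const (b 0 • l))).sub
      hW.tendsto_inv_smul_nhds_zero
  refine hlim.congr' ?_
  filter_upwards [hb.eventually_gt_atTop 0] with n hn
  rw [abel, smul_sub, smul_add, inv_smul_smul₀ hn.ne']

lemma sum_Ico_inv_sq_le (j n : ℕ) : ∑ k ∈ Ico j n, ((k + 1 : ℝ) ^ 2)⁻¹ ≤ 2 / (j + 1) := by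
  have h := sum_Ico_add' (fun k : ℕ ↦ ((k : ℝ) ^ 2)⁻¹) j n 1
  push_cast at h
  rw [h, Ico_add_one_left_eq_Ioo]
  exact sum_Ioo_inv_sq_le j (n + 1)

lemma le_mul_log_of_two_mul_div_log_le {t x : ℝ} (ht0 : 0 < t) (ht : 1 < log t)
    (hx : 2 * t / log t ≤ x) : t ≤ x * log x := by
  have hpos : 0 < 2 * t / log t := by positivity
  have hlog : log t / 2 ≤ log x := by
    have hloglog : log (log t) ≤ log 2 + log t / 2 := by
      have := log_le_sub_one_of_pos (show 0 < log t / 2 by linarith)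
      rw [log_div (by linarith) two_ne_zero] at this
      linarith
    calc log t / 2 ≤ log 2 + log t - log (log t) := by linarith
      _ = log (2 * t / log t) := by
        rw [log_div (by positivity) (by linarith), log_mul two_ne_zero ht0.ne']
      _ ≤ log x := log_le_log hpos hx
  calc t = (2 * t / log t) * (log t / 2) := by field_simp
    _ ≤ x * log x := mul_le_mul hx hlog (by linarith) (hpos.le.trans hx)

lemma tendsto_sum_Icc_div_of_eventuallyEq {u v b : ℕ → ℝ} (a : ℕ) (hb : Tendsto b atTop atTop)
    (huv : u =ᶠ[atTop] v) (hu : Tendsto (fun n ↦ (∑ k ∈ Icc a n, u k) / b n) atTop (𝓝 0)) :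
    Tendsto (fun n ↦ (∑ k ∈ Icc a n, v k) / b n) atTop (𝓝 0) := by
  obtain ⟨K, hK⟩ := eventually_atTop.1 huv
  have hconst : Tendsto (fun n ↦ (∑ k ∈ Icc a K, (v k - u k)) / b n) atTop (𝓝 0) :=
    tendsto_const_nhds.div_atTop hb
  have h := hu.add hconst
  rw [add_zero] at h
  refine h.congr' ?_
  filter_upwards [eventually_ge_atTop K] with n hn
  have htail : ∑ k ∈ Icc a K, (v k - u k) = ∑ k ∈ Icc a n, (v k - u k) :=
    sum_subset (Icc_subset_Icc_right hn) fun k hk hkK ↦ by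
      rw [hK k (by simp_all; omega), sub_self]
  simp [← add_div, htail]

section Martingale

variable {Ω : Type*} {m0 : MeasurableSpace Ω} {μ : Measure Ω}

theorem MeasureTheory.Submartingale.ae_exists_tendsto_of_integral_sq_le [IsFiniteMeasure μ]
    {ℱ : Filtration ℕ m0} {f : ℕ → Ω → ℝ} (hf : Submartingale f ℱ μ)
    (hL2 : ∀ n, MemLp (f n) 2 μ) {M : ℝ} (hM : ∀ n, ∫ ω, f n ω ^ 2 ∂μ ≤ M) :
    ∀ᵐ ω ∂μ, ∃ c, Tendsto (fun n ↦ f n ω) atTop (𝓝 c) := by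
  have hbdd : ∀ n, eLpNorm (f n) 1 μ ≤ (μ.real Set.univ + M).toNNReal := by
    intro n
    have hsq : Integrable (fun ω ↦ 1 + f n ω ^ 2) μ :=
      (integrable_const 1).add (hL2 n).integrable_sq
    rw [eLpNorm_one_eq_lintegral_enorm]
    change _ ≤ ENNReal.ofReal _
    calc ∫⁻ ω, ‖f n ω‖ₑ ∂μ ≤ ∫⁻ ω, ENNReal.ofReal (1 + f n ω ^ 2) ∂μ := by
          refine lintegral_mono fun ω ↦ ?_
          rw [← ofReal_norm, Real.norm_eq_abs]
          exact ENNReal.ofReal_le_ofReal (by nlinarith [sq_abs (f n ω), sq_nonneg (|f n ω| - 1)])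
      _ = ENNReal.ofReal (∫ ω, 1 + f n ω ^ 2 ∂μ) :=
          (ofReal_integral_eq_lintegral_ofReal hsq (ae_of_all _ fun ω ↦ by positivity)).symm
      _ ≤ ENNReal.ofReal (μ.real Set.univ + M) := by
          rw [integral_add (integrable_const 1) (hL2 n).integrable_sq]
          exact ENNReal.ofReal_le_ofReal (by simpa using hM n)
  filter_upwards [hf.ae_tendsto_limitProcess hbdd] with ω hω
  exact ⟨_, hω⟩

theorem ProbabilityTheory.iIndepFun.martingale_sum_range_succ {E : Type*}
    [NormedAddCommGroup E] [NormedSpace ℝ E] [CompleteSpace E] [MeasurableSpace E] [BorelSpace E]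
    [SecondCountableTopology E]
    [IsProbabilityMeasure μ] {Z : ℕ → Ω → E} (hsm : ∀ n, StronglyMeasurable (Z n))
    (hindep : iIndepFun Z μ) (hint : ∀ n, Integrable (Z n) μ) (hmean : ∀ n, ∫ ω, Z n ω ∂μ = 0) :
    Martingale (fun n ↦ ∑ k ∈ range (n + 1), Z k) (Filtration.natural Z hsm) μ := by
  set ℱ := Filtration.natural Z hsm
  have hadapted : StronglyAdapted ℱ fun n ↦ ∑ k ∈ range (n + 1), Z k := fun n ↦
    Finset.stronglyMeasurable_sum _ fun k hk ↦
      (Filtration.stronglyAdapted_natural hsm k).mono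
        (ℱ.mono (Nat.lt_succ_iff.1 (mem_range.1 hk)))
  have hsum_int : ∀ n, Integrable (∑ k ∈ range (n + 1), Z k) μ := fun n ↦
    integrable_finsetSum' _ fun k _ ↦ hint k
  refine martingale_nat hadapted hsum_int fun n ↦ ?_
  have hnext : μ[Z (n + 1)|ℱ n] =ᵐ[μ] 0 := by
    filter_upwards [hindep.condExp_natural_ae_eq_of_lt hsm (Nat.lt_add_one n)] with ω hω
    exact hω.trans (hmean (n + 1))
  rw [sum_range_succ _ (n + 1)]
  refine EventuallyEq.symm ?_
  refine (condExp_add (hsum_int n) (hint (n + 1)) _).trans ?_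
  rw [condExp_of_stronglyMeasurable (ℱ.le n) (hadapted n) (hsum_int n)]
  simpa using hnext.add_left (f₃ := ∑ k ∈ range (n + 1), Z k)

theorem ProbabilityTheory.iIndepFun.ae_exists_tendsto_sum_sub_integral [IsProbabilityMeasure μ]
    {Z : ℕ → Ω → ℝ} (hmeas : ∀ n, Measurable (Z n)) (hindep : iIndepFun Z μ)
    (hL2 : ∀ n, MemLp (Z n) 2 μ) {M : ℝ}
    (hvar : ∀ n, ∑ k ∈ range n, Var[Z k; μ] ≤ M) :
    ∀ᵐ ω ∂μ, ∃ c, Tendsto (fun n ↦ ∑ k ∈ range n, (Z k ω - ∫ x, Z k x ∂μ)) atTop (𝓝 c) := by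
  set W : ℕ → Ω → ℝ := fun k ω ↦ Z k ω - ∫ x, Z k x ∂μ
  have hWindep : iIndepFun W μ :=
    hindep.comp (fun k x ↦ x - ∫ y, Z k y ∂μ) fun k ↦ measurable_id.sub_const _
  have hWL2 : ∀ k, MemLp (W k) 2 μ := fun k ↦ (hL2 k).sub (memLp_const _)
  have hWmean : ∀ k, ∫ ω, W k ω ∂μ = 0 := fun k ↦ by
    simp [W, integral_sub ((hL2 k).integrable one_le_two) (integrable_const _)]
  have hmart := hWindep.martingale_sum_range_succ
    (fun k ↦ ((hmeas k).sub_const _).stronglyMeasurable) (fun k ↦ (hWL2 k).integrable one_le_two)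
    hWmean
  have hsq : ∀ n, ∫ ω, (∑ k ∈ range (n + 1), W k) ω ^ 2 ∂μ ≤ M := by
    intro n
    have hmean : ∫ ω, (∑ k ∈ range (n + 1), W k) ω ∂μ = 0 := by
      simp [integral_finsetSum _ fun k _ ↦ (hWL2 k).integrable one_le_two, hWmean]
    rw [← variance_of_integral_eq_zero (memLp_finsetSum' _ fun k _ ↦ hWL2 k).aemeasurable hmean,
      IndepFun.variance_sum (fun k _ ↦ hWL2 k) fun i _ j _ hij ↦ hWindep.indepFun hij]
    simpa only [W, variance_sub_const (hmeas _).aestronglyMeasurable] using hvar (n + 1)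
  filter_upwards [hmart.submartingale.ae_exists_tendsto_of_integral_sq_le
    (fun n ↦ memLp_finsetSum' _ fun k _ ↦ hWL2 k) hsq] with ω ⟨c, hc⟩
  exact ⟨c, (tendsto_add_atTop_iff_nat 1).1 (by simpa using hc)⟩

end Martingale

namespace Jajte

noncomputable def phi (k : ℕ) : ℝ := ((k : ℝ) + 1) * log ((k : ℝ) + 1)

lemma phi_zero : phi 0 = 0 := by simp [phi]

lemma phi_nonneg (k : ℕ) : 0 ≤ phi k :=
  mul_nonneg (by positivity) (log_nonneg (by simp))

lemma phi_mono : Monotone phi := fun j k hjk ↦ by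
  have h : (j : ℝ) + 1 ≤ k + 1 := by exact_mod_cast Nat.succ_le_succ hjk
  exact mul_le_mul h (log_le_log (by positivity) h) (log_nonneg (by simp)) (by positivity)

lemma phi_one : phi 1 = 2 * log 2 := by norm_num [phi]

lemma one_lt_phi {k : ℕ} (hk : 1 ≤ k) : 1 < phi k := by
  have := phi_mono hk
  rw [phi_one] at this
  linarith [log_two_gt_d9]

lemma tendsto_phi_atTop : Tendsto phi atTop atTop := by
  refine tendsto_atTop_mono' atTop ?_
    (tendsto_natCast_atTop_atTop.atTop_mul_const (log_pos one_lt_two))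
  filter_upwards [eventually_ge_atTop 1] with k hk
  have h : (2 : ℝ) ≤ k + 1 := by exact_mod_cast Nat.succ_le_succ hk
  exact mul_le_mul (by linarith) (log_le_log two_pos h) (log_nonneg one_le_two) (by positivity)

lemma le_phi_of_le {t : ℝ} {k : ℕ} (h : 4 * (t / (1 + max (log t) 0)) + 4 ≤ k + 1) :
    t ≤ phi k := by
  rcases le_or_gt t 0 with ht0 | ht0
  · exact ht0.trans (phi_nonneg k)
  have hk : 3 ≤ k := by
    have : 0 ≤ 4 * (t / (1 + max (log t) 0)) := by positivity
    exact_mod_cast (by linarith : (3 : ℝ) ≤ k)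
  have hlog2 := log_two_gt_d9
  have hphi3 : 8 * log 2 ≤ phi k := by
    have h4 : phi 3 = 8 * log 2 := by
      rw [phi, show ((3 : ℕ) : ℝ) + 1 = 2 ^ 2 by norm_num, log_pow]; ring
    exact h4 ▸ phi_mono hk
  rcases le_or_gt t (8 * log 2) with ht8 | ht8
  · exact ht8.trans hphi3
  have hlogt : 1 < log t := by
    rw [← log_exp 1]
    exact log_lt_log (exp_pos 1) (by linarith [exp_one_lt_d9])
  refine le_mul_log_of_two_mul_div_log_le ht0 hlogt ?_
  calc 2 * t / log t = 4 * t / (2 * log t) := by field_simp; ring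
    _ ≤ 4 * t / (1 + max (log t) 0) := by
      gcongr
      rw [max_eq_left (by linarith)]
      linarith
    _ ≤ k + 1 := by rw [mul_div_assoc]; linarith

lemma tsum_ite_phi_lt_le (t : ℝ) :
    ∑' k, (if phi k < t then 1 else 0 : ℝ≥0∞)
      ≤ ENNReal.ofReal (4 * (t / (1 + max (log t) 0)) + 4) := by
  rcases le_or_gt t 0 with ht | ht
  · simp [fun k ↦ not_lt.2 (ht.trans (phi_nonneg k))]
  set R := 4 * (t / (1 + max (log t) 0)) + 3
  have hR : 0 ≤ R := by positivity
  calc ∑' k, (if phi k < t then 1 else 0 : ℝ≥0∞)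
      = ∑ k ∈ range ⌈R⌉₊, (if phi k < t then 1 else 0 : ℝ≥0∞) := by
        refine tsum_eq_sum fun k hk ↦ if_neg (not_lt.2 (le_phi_of_le ?_))
        have : R ≤ k := (Nat.ceil_le.1 (not_lt.1 (mem_range.not.1 hk)))
        linarith
    _ ≤ ∑ _k ∈ range ⌈R⌉₊, (1 : ℝ≥0∞) := sum_le_sum fun k _ ↦ by split_ifs <;> simp
    _ = ENNReal.ofReal ⌈R⌉₊ := by simp
    _ ≤ ENNReal.ofReal (R + 1) := ENNReal.ofReal_le_ofReal (Nat.ceil_lt_add_one hR).le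
    _ = _ := by congr 1; ring

noncomputable def truncAt (c x : ℝ) : ℝ := if |x| ≤ c then x else 0

lemma measurable_truncAt (c : ℝ) : Measurable (truncAt c) :=
  Measurable.ite (measurableSet_le measurable_abs measurable_const) measurable_id measurable_const

lemma abs_truncAt_div_le_one (c x : ℝ) : |truncAt c x / c| ≤ 1 := by
  unfold truncAt
  split_ifs with h
  · rw [abs_div]
    exact div_le_one_of_le₀ (h.trans (le_abs_self c)) (abs_nonneg c)
  · simp

lemma truncAt_div_sq (c x : ℝ) :
    (truncAt c x / c) ^ 2 = if |x| ≤ c then |x| ^ 2 / c ^ 2 else 0 := by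
  unfold truncAt
  split_ifs <;> simp [div_pow]

lemma sum_ite_div_phi_sq_le {t : ℝ} {j : ℕ} (hj : 1 ≤ j) (hmin : ∀ k, t ≤ phi k → j ≤ k)
    (n : ℕ) : ∑ k ∈ range n, (if t ≤ phi k then t ^ 2 / phi k ^ 2 else 0)
      ≤ 2 * t ^ 2 / (log (j + 1) ^ 2 * (j + 1)) := by
  have hl : 0 < log ((j : ℝ) + 1) := log_pos (by norm_cast; omega)
  calc ∑ k ∈ range n, (if t ≤ phi k then t ^ 2 / phi k ^ 2 else 0)
      ≤ ∑ k ∈ range n with j ≤ k, t ^ 2 / log (j + 1) ^ 2 * ((k + 1 : ℝ) ^ 2)⁻¹ := by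
        rw [sum_filter]
        gcongr with k
        split_ifs with htk hjk hjk
        · have hlog : log ((j : ℝ) + 1) ≤ log (k + 1) := log_le_log (by positivity) (by simpa)
          calc t ^ 2 / phi k ^ 2 ≤ t ^ 2 / ((k + 1) * log (j + 1)) ^ 2 := by
                unfold phi; gcongr
            _ = _ := by field_simp
        · exact absurd (hmin k htk) hjk
        · positivity
        · rfl
    _ = ∑ k ∈ Ico j n, t ^ 2 / log (j + 1) ^ 2 * ((k + 1 : ℝ) ^ 2)⁻¹ := by
        congr 1; ext k; simp [and_comm]
    _ = t ^ 2 / log (j + 1) ^ 2 * ∑ k ∈ Ico j n, ((k + 1 : ℝ) ^ 2)⁻¹ := by rw [mul_sum]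
    _ ≤ t ^ 2 / log (j + 1) ^ 2 * (2 / (j + 1)) := by gcongr; exact sum_Ico_inv_sq_le j n
    _ = 2 * t ^ 2 / (log (j + 1) ^ 2 * (j + 1)) := by field_simp

lemma two_mul_sq_div_log_sq_mul_le {t : ℝ} {j : ℕ} (hj : 2 ≤ j) (ht : 1 < t) (htj : t ≤ phi j) :
    2 * t ^ 2 / (log (j + 1) ^ 2 * (j + 1)) ≤ 6 * (t / (1 + log t)) := by
  set l := log ((j : ℝ) + 1)
  have hj1 : (3 : ℝ) ≤ j + 1 := by exact_mod_cast Nat.succ_le_succ hj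
  have hl : 1 < l := by
    rw [← log_exp 1]
    exact log_lt_log (exp_pos 1) (by linarith [exp_one_lt_d9])
  have htj' : t ≤ (j + 1) * l := htj
  have hlogt : 1 + log t ≤ 3 * l := by
    have hl' : l ≤ j + 1 := by
      linarith [log_le_sub_one_of_pos (by positivity : (0 : ℝ) < j + 1)]
    have : log t ≤ log (((j : ℝ) + 1) ^ 2) := log_le_log (by linarith) (by nlinarith)
    rw [log_pow] at this
    push_cast at this
    linarith
  rw [mul_div_assoc', div_le_div_iff₀ (by positivity) (by linarith [log_pos ht])]
  nlinarith [mul_le_mul htj' hlogt (by linarith [log_pos ht]) (by positivity)]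

lemma sum_truncAt_div_phi_sq_le (x : ℝ) (n : ℕ) :
    ∑ k ∈ range n, (truncAt (phi k) x / phi k) ^ 2 ≤ 6 * (|x| / (1 + max (log |x|) 0)) + 4 := by
  simp only [truncAt_div_sq]
  set t := |x|
  have hrhs : 0 ≤ 6 * (t / (1 + max (log t) 0)) := by positivity
  rcases (abs_nonneg x).eq_or_lt with ht0 | ht0
  · simp [t, ← ht0]
  obtain ⟨j, htj, hmin⟩ : ∃ j, t ≤ phi j ∧ ∀ k, t ≤ phi k → j ≤ k := by
    have hex : ∃ k, t ≤ phi k := (tendsto_phi_atTop.eventually_ge_atTop t).exists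
    exact ⟨Nat.find hex, Nat.find_spec hex, fun k hk ↦ Nat.find_min' hex hk⟩
  have hj1 : 1 ≤ j := Nat.one_le_iff_ne_zero.2 fun hj ↦ by
    rw [hj, phi_zero] at htj
    linarith
  refine (sum_ite_div_phi_sq_le hj1 hmin n).trans ?_
  rcases hj1.eq_or_lt with rfl | hj
  · rw [phi_one] at htj
    have hl := log_pos one_lt_two
    have : 2 * t ^ 2 / (log 2 ^ 2 * 2) ≤ 4 := by
      rw [div_le_iff₀ (by positivity)]
      nlinarith
    norm_num
    linarith
  · have ht1 : 1 < t := by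
      by_contra! h
      have := hmin (j - 1) (h.trans (one_lt_phi (Nat.le_sub_one_of_lt hj)).le)
      omega
    rw [max_eq_left (log_pos ht1).le]
    linarith [two_mul_sq_div_log_sq_mul_le hj ht1 htj]

section IdentDistrib

variable {Ω : Type*} [MeasurableSpace Ω] {μ : Measure Ω} {X : ℕ → Ω → ℝ}

theorem ae_eventually_abs_le_phi [IsFiniteMeasure μ]
    (hident : ∀ k, IdentDistrib (X k) (X 0) μ μ)
    (hint : Integrable (fun ω ↦ |X 0 ω| / (1 + max (log |X 0 ω|) 0)) μ) :
    ∀ᵐ ω ∂μ, ∀ᶠ k in atTop, |X k ω| ≤ phi k := by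
  have hX0 := (hident 0).aemeasurable_fst
  have hset : ∀ {k}, MeasurableSet {x : ℝ | phi k < |x|} :=
    measurableSet_lt measurable_const measurable_abs
  have hsum : ∑' k, μ {ω | phi k < |X k ω|} ≠ ∞ := by
    refine (lt_of_le_of_lt ?_ ((hint.const_mul 4).add (integrable_const 4)).lintegral_lt_top).ne
    calc ∑' k, μ {ω | phi k < |X k ω|} = ∑' k, μ {ω | phi k < |X 0 ω|} :=
          tsum_congr fun k ↦ (hident k).measure_mem_eq hset
      _ = ∑' k, ∫⁻ ω, (if phi k < |X 0 ω| then 1 else 0) ∂μ := tsum_congr fun k ↦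
          (lintegral_indicator_one₀ (hX0.nullMeasurableSet_preimage hset)).symm
      _ = ∫⁻ ω, ∑' k, (if phi k < |X 0 ω| then 1 else 0) ∂μ :=
          (lintegral_tsum fun k ↦
            (Measurable.ite hset measurable_const measurable_const).comp_aemeasurable hX0).symm
      _ ≤ _ := lintegral_mono fun ω ↦ tsum_ite_phi_lt_le _
  filter_upwards [ae_eventually_notMem hsum] with ω hω
  simpa using hω

theorem sum_variance_truncAt_div_phi_le [IsProbabilityMeasure μ]
    (hident : ∀ k, IdentDistrib (X k) (X 0) μ μ)
    (hint : Integrable (fun ω ↦ |X 0 ω| / (1 + max (log |X 0 ω|) 0)) μ) (n : ℕ) :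
    ∑ k ∈ range n, Var[fun ω ↦ truncAt (phi k) (X k ω) / phi k; μ]
      ≤ ∫ ω, 6 * (|X 0 ω| / (1 + max (log |X 0 ω|) 0)) + 4 ∂μ := by
  have hg : ∀ k, Measurable fun x ↦ (truncAt (phi k) x / phi k) ^ 2 := fun k ↦
    ((measurable_truncAt _).div_const _).pow_const 2
  have hint_k : ∀ k, Integrable (fun ω ↦ (truncAt (phi k) (X 0 ω) / phi k) ^ 2) μ := fun k ↦
    Integrable.of_bound ((hg k).comp_aemeasurable (hident 0).aemeasurable_fst).aestronglyMeasurable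
      1 (ae_of_all _ fun ω ↦ by
        rw [norm_pow, Real.norm_eq_abs]
        exact pow_le_one₀ (abs_nonneg _) (abs_truncAt_div_le_one _ _))
  calc ∑ k ∈ range n, Var[fun ω ↦ truncAt (phi k) (X k ω) / phi k; μ]
      ≤ ∑ k ∈ range n, ∫ ω, (truncAt (phi k) (X 0 ω) / phi k) ^ 2 ∂μ := by
        refine sum_le_sum fun k _ ↦ (variance_le_expectation_sq ?_).trans_eq
          ((hident k).comp (hg k)).integral_eq
        exact (((measurable_truncAt _).div_const _).comp_aemeasurable
          (hident k).aemeasurable_fst).aestronglyMeasurable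
    _ = ∫ ω, ∑ k ∈ range n, (truncAt (phi k) (X 0 ω) / phi k) ^ 2 ∂μ :=
        (integral_finsetSum _ fun k _ ↦ hint_k k).symm
    _ ≤ _ := integral_mono (integrable_finsetSum _ fun k _ ↦ hint_k k)
        ((hint.const_mul 6).add (integrable_const 4)) fun ω ↦ sum_truncAt_div_phi_sq_le _ _

end IdentDistrib

end Jajte

open Jajte in
/-- Jajte-type strong law with logarithmic normalisation: for i.i.d. `(Xₙ)` with
`E[|X|/(1 + log₊|X|)] < ∞` and truncated means `mₖ = E[Xₖ·1_{|Xₖ| ≤ (k+1)log(k+1)}]`,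
`(1/((n+1)log(n+1)))·∑_{i=1}^n (Xᵢ - mᵢ) → 0` almost surely. -/
theorem jajte_log_strong_law {Ω : Type*} [MeasureSpace Ω]
    [IsProbabilityMeasure (volume : Measure Ω)]
    (X : ℕ → Ω → ℝ) (hmeas : ∀ n, Measurable (X n))
    (hindep : iIndepFun X)
    (hident : ∀ n, IdentDistrib (X n) (X 0))
    (hint : Integrable (fun ω => |X 0 ω| / (1 + max (Real.log |X 0 ω|) 0)))
    (m : ℕ → ℝ)
    (hm : ∀ k, m k = ∫ ω, if |X k ω| ≤ ((k : ℝ) + 1) * Real.log ((k : ℝ) + 1)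
        then X k ω else 0) :
    ∀ᵐ ω, Tendsto
      (fun n : ℕ => (∑ i ∈ Finset.Icc 1 n, (X i ω - m i)) /
        (((n : ℝ) + 1) * Real.log ((n : ℝ) + 1)))
      atTop (nhds 0) := by
  set Z : ℕ → Ω → ℝ := fun k ω ↦ truncAt (phi k) (X k ω) / phi k
  have hZmeas : ∀ k, Measurable (Z k) := fun k ↦
    ((measurable_truncAt _).comp (hmeas k)).div_const _
  have hZindep : iIndepFun Z :=
    hindep.comp (fun k x ↦ truncAt (phi k) x / phi k) fun k ↦ (measurable_truncAt _).div_const _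
  have hZL2 : ∀ k, MemLp (Z k) 2 := fun k ↦
    MemLp.of_bound (hZmeas k).aestronglyMeasurable 1
      (ae_of_all _ fun ω ↦ abs_truncAt_div_le_one _ _)
  filter_upwards [hZindep.ae_exists_tendsto_sum_sub_integral hZmeas hZL2
    (sum_variance_truncAt_div_phi_le hident hint), ae_eventually_abs_le_phi hident hint]
    with ω ⟨c, hc⟩ hbdd
  have hkron := tendsto_inv_smul_sum_smul_of_tendsto_sum phi_mono tendsto_phi_atTop hc
  have hrange : ∀ n, ∑ k ∈ range (n + 1), phi k * (Z k ω - ∫ x, Z k x)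
      = ∑ k ∈ Icc 1 n, phi k * (Z k ω - ∫ x, Z k x) := by
    intro n
    rw [range_eq_Ico, sum_eq_sum_Ico_succ_bot n.succ_pos, phi_zero, zero_mul, zero_add]
    rfl
  have hterm : (fun k ↦ phi k * (Z k ω - ∫ x, Z k x)) =ᶠ[atTop] fun k ↦ X k ω - m k := by
    filter_upwards [hbdd, eventually_ge_atTop 1] with k hk hk1
    have hmk : m k = ∫ x, truncAt (phi k) (X k x) := hm k
    simp only [Z, integral_div, ← sub_div, hmk]
    rw [mul_div_cancel₀ _ (zero_lt_one.trans (one_lt_phi hk1)).ne', truncAt, if_pos hk]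
  have hkron' : Tendsto (fun n ↦ (∑ k ∈ Icc 1 n, phi k * (Z k ω - ∫ x, Z k x)) / phi n)
      atTop (𝓝 0) := by
    simpa only [smul_eq_mul, hrange, div_eq_inv_mul] using hkron
  exact tendsto_sum_Icc_div_of_eventuallyEq 1 tendsto_phi_atTop hterm hkron'
end
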